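/- arXiv:2011.04156 — 2 statements merged into one kernel-verified Lean document; each statement's English description precedes it below -/
import Mathlib

section
/- Let M be a Riemannian manifold and ε > 0 such that every ball of radius ε is geodesically convex. If a subset S ⊆ M is a union of k geodesically convex balls of radius at most 2^{-k}ε, then S can be covered by at most k pairwise disjoint geodesically convex balls of radius at most ε. -/
private lemma key_pow_ineq (a b : ℕ) (ha : 1 ≤ a) (hb : 1 ≤ b) :
    ((2:ℝ)^a - 1) + 2 * ((2:ℝ)^b - 1) ≤ (2:ℝ)^(a+b) - 1 := by
  have hx : (2:ℝ) ≤ 2^a := by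
    calc (2:ℝ) = 2^1 := (pow_one 2).symm
    _ ≤ 2^a := pow_le_pow_right₀ (by norm_num) ha
  have hy : (2:ℝ) ≤ 2^b := by
    calc (2:ℝ) = 2^1 := (pow_one 2).symm
    _ ≤ 2^b := pow_le_pow_right₀ (by norm_num) hb
  have hy1 : (1:ℝ) ≤ 2^b := by linarith
  rw [pow_add]
  nlinarith [mul_nonneg (sub_nonneg.2 hx) (sub_nonneg.2 hy1)]

private lemma merge_lemma {M : Type} [MetricSpace M] (ρ : ℝ) (hρ : 0 < ρ) :
    ∀ (n : ℕ) (c : Fin n → M) (s : Fin n → ℝ) (w : Fin n → ℕ),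
    (∀ i, 1 ≤ w i) → (∀ i, s i ≤ ((2:ℝ)^(w i) - 1) * ρ) →
    ∃ (m : ℕ) (d : Fin m → M) (t : Fin m → ℝ),
      m ≤ n ∧ (∀ i, t i ≤ ((2:ℝ)^(∑ i, w i) - 1) * ρ) ∧
      (Pairwise fun i j : Fin m => Disjoint (Metric.ball (d i) (t i)) (Metric.ball (d j) (t j))) ∧
      (⋃ i, Metric.ball (c i) (s i)) ⊆ ⋃ i, Metric.ball (d i) (t i) := by
  intro n
  induction n with
  | zero =>
    intro c s w _ _
    exact ⟨0, Fin.elim0, Fin.elim0, le_refl 0, fun i => i.elim0, fun i => i.elim0, by simp⟩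
  | succ n ih =>
    intro c s w hw hs
    by_cases hpd : Pairwise fun i j : Fin (n+1) =>
        Disjoint (Metric.ball (c i) (s i)) (Metric.ball (c j) (s j))
    · refine ⟨n+1, c, s, le_refl _, ?_, hpd, subset_refl _⟩
      intro i
      refine le_trans (hs i) ?_
      have h1 : w i ≤ ∑ j, w j :=
        Finset.single_le_sum (fun j _ => Nat.zero_le _) (Finset.mem_univ i)
      have h2 : (2:ℝ)^(w i) ≤ 2^(∑ j, w j) := pow_le_pow_right₀ (by norm_num) h1
      nlinarith
    · -- find two intersecting balls
      rw [Pairwise] at hpd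
      push_neg at hpd
      obtain ⟨i, j, hij, hnd⟩ := hpd
      obtain ⟨y, hyi, hyj⟩ := Set.not_disjoint_iff.1 hnd
      rw [Metric.mem_ball] at hyi hyj
      have hsj : 0 < s j := lt_of_le_of_lt dist_nonneg hyj
      have hdij : dist (c i) (c j) < s i + s j := by
        calc dist (c i) (c j) ≤ dist (c i) y + dist y (c j) := dist_triangle _ _ _
        _ < s i + s j := by rw [dist_comm (c i) y]; linarith
      obtain ⟨z, hz⟩ := Fin.exists_succAbove_eq hij
      -- new families on Fin n
      set c' : Fin n → M := Function.update (c ∘ j.succAbove) z (c i) with hc'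
      set s' : Fin n → ℝ := Function.update (s ∘ j.succAbove) z (s i + 2 * s j) with hs'
      set w' : Fin n → ℕ := Function.update (w ∘ j.succAbove) z (w i + w j) with hw'
      have hw'1 : ∀ a, 1 ≤ w' a := by
        intro a
        by_cases ha : a = z
        · subst ha; simp [hw', Function.update_self]; exact le_trans (hw i) (Nat.le_add_right _ _)
        · simp [hw', Function.update_of_ne ha]; exact hw _
      have hs'le : ∀ a, s' a ≤ ((2:ℝ)^(w' a) - 1) * ρ := by
        intro a
        by_cases ha : a = z
        · subst ha
          simp only [hs', hw', Function.update_self]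
          have := key_pow_ineq (w i) (w j) (hw i) (hw j)
          have h1 := hs i
          have h2 := hs j
          nlinarith
        · simp only [hs', hw', Function.update_of_ne ha, Function.comp_apply]
          exact hs _
      obtain ⟨m, d, t, hm, ht, hdisj, hcov⟩ := ih c' s' w' hw'1 hs'le
      -- sum of weights preserved
      have hsum : ∑ a, w' a = ∑ a, w a := by
        have e1 : ∑ a : Fin (n+1), w a = w j + ∑ a : Fin n, w (j.succAbove a) :=
          Fin.sum_univ_succAbove w j
        have e2 : ∑ a : Fin n, w' a
            = (w i + w j) + ∑ a ∈ Finset.univ \ {z}, (w ∘ j.succAbove) a :=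
          Finset.sum_update_of_mem (Finset.mem_univ z) _ _
        have e3 : ∑ a : Fin n, w (j.succAbove a)
            = w (j.succAbove z) + ∑ a ∈ Finset.univ \ {z}, (w ∘ j.succAbove) a := by
          rw [Finset.sdiff_singleton_eq_erase, ← Finset.add_sum_erase _ _ (Finset.mem_univ z)]
          rfl
        rw [hz] at e3
        omega
      refine ⟨m, d, t, le_trans hm (Nat.le_succ n), ?_, hdisj, ?_⟩
      · intro a; have := ht a; rwa [hsum] at this
      · refine subset_trans ?_ hcov
        rintro x hx
        rw [Set.mem_iUnion] at hx ⊢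
        obtain ⟨a, hxa⟩ := hx
        rw [Metric.mem_ball] at hxa
        by_cases haj : a = j
        · subst haj
          refine ⟨z, ?_⟩
          rw [Metric.mem_ball]
          simp only [hc', hs', Function.update_self]
          calc dist x (c i) ≤ dist x (c a) + dist (c a) (c i) := dist_triangle _ _ _
          _ < s a + (s i + s a) := by rw [dist_comm (c a) (c i)]; linarith
          _ = s i + 2 * s a := by ring
        · obtain ⟨b, hb⟩ := Fin.exists_succAbove_eq haj
          by_cases hbz : b = z
          · subst hbz
            rw [hz] at hb; subst hb
            refine ⟨b, ?_⟩
            rw [Metric.mem_ball]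
            simp only [hc', hs', Function.update_self]
            linarith
          · refine ⟨b, ?_⟩
            rw [Metric.mem_ball]
            simp only [hc', hs', Function.update_of_ne hbz, Function.comp_apply, hb]
            exact hxa

/-- In a metric space (abstracting the Riemannian setting), fix `ε > 0`.
If a set `S` is a union of `k` balls of radius at most `2^{-k}·ε`, then `S` can be covered by
at most `k` pairwise disjoint balls of radius at most `ε`. -/
theorem cover_by_disjoint_balls {M : Type} [MetricSpace M] (ε : ℝ) (hε : 0 < ε)
    (k : ℕ) (hk : 1 ≤ k) (c : Fin k → M) (r : Fin k → ℝ) (hr : ∀ i, r i ≤ ε / 2 ^ k) :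
    ∃ (m : ℕ) (d : Fin m → M) (s : Fin m → ℝ),
      m ≤ k ∧ (∀ i, s i ≤ ε) ∧
      (Pairwise fun i j : Fin m => Disjoint (Metric.ball (d i) (s i)) (Metric.ball (d j) (s j))) ∧
      (⋃ i, Metric.ball (c i) (r i)) ⊆ ⋃ i, Metric.ball (d i) (s i) := by
  have hρ : 0 < ε / 2 ^ k := div_pos hε (by positivity)
  obtain ⟨m, d, t, hm, ht, hdisj, hcov⟩ :=
    merge_lemma (ε / 2 ^ k) hρ k c r (fun _ => 1) (fun _ => le_refl 1)
      (fun i => le_trans (hr i) (by norm_num))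
  refine ⟨m, d, t, hm, ?_, hdisj, hcov⟩
  intro i
  have := ht i
  have hsum : (∑ _j : Fin k, 1) = k := by simp
  rw [hsum] at this
  have hpow : (0:ℝ) < 2 ^ k := by positivity
  calc t i ≤ ((2:ℝ)^k - 1) * (ε / 2^k) := this
  _ = ε - ε / 2^k := by field_simp
  _ ≤ ε := by linarith
end

section
/- Let μ_1, ..., μ_N be a partition of unity on a manifold M, ν_j = Σ_{i≤j} μ_i, and define H_1 : M × Δ^q → M × Δ^q on the simplex Δ^q = {0 ≤ t_1 ≤ ... ≤ t_q ≤ 1} by H_1(x, t) = (x, u) where u_i(x, t) = ν_{⌊Nt_i⌋}(x) + μ_{⌊Nt_i⌋+1}(x)(Nt_i − ⌊Nt_i⌋). Then H_1 is well-defined (each u lies in Δ^q), continuous, and commutes with the face inclusions d_i : Δ^{q-1} → Δ^q in the sense that H_1 ∘ (id_M × d_i) = (id_M × d_i) ∘ H_1. -/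
/-- The model of the `q`-simplex `{0 ≤ t 0 ≤ t 1 ≤ ⋯ ≤ 1}` with ordered coordinates. -/
def orderedSimplex (q : ℕ) : Set (Fin q → ℝ) :=
  {t | Monotone t ∧ ∀ i, t i ∈ Set.Icc (0 : ℝ) 1}

/-- `μ'_m`, the `m`-th partition of unity function (`0`-indexed), extended by `0`. -/
noncomputable def muExt {M : Type} [TopologicalSpace M] {N : ℕ} (μ : Fin N → C(M, ℝ))
    (m : ℕ) (x : M) : ℝ :=
  if h : m < N then μ ⟨m, h⟩ x else 0

/-- `ν_m = μ_1 + ⋯ + μ_m`, the partial sums of the partition of unity. -/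
noncomputable def nuSum {M : Type} [TopologicalSpace M] {N : ℕ} (μ : Fin N → C(M, ℝ))
    (m : ℕ) (x : M) : ℝ :=
  ∑ i ∈ Finset.range m, muExt μ i x

/-- The coordinate function of Thurston's fragmentation map:
`u(x, s) = ν_{⌊Ns⌋}(x) + μ_{⌊Ns⌋+1}(x) · (Ns - ⌊Ns⌋)`. -/
noncomputable def fragCoord {M : Type} [TopologicalSpace M] {N : ℕ} (μ : Fin N → C(M, ℝ))
    (x : M) (s : ℝ) : ℝ :=
  nuSum μ ⌊(N : ℝ) * s⌋₊ x + muExt μ ⌊(N : ℝ) * s⌋₊ x * ((N : ℝ) * s - ⌊(N : ℝ) * s⌋₊)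

/-- Thurston's fragmentation map `H₁ : M × Δ^q → M × Δ^q`, `H₁(x,t) = (x, u(x,t))`. -/
noncomputable def fragMap {M : Type} [TopologicalSpace M] {N : ℕ} (μ : Fin N → C(M, ℝ))
    (q : ℕ) : M × (Fin q → ℝ) → M × (Fin q → ℝ) :=
  fun p => (p.1, fun i => fragCoord μ p.1 (p.2 i))

/-- Extension of the coordinates of a point of the `q`-simplex by `0` below and `1` above,
used to write all the face inclusions by one formula. -/
noncomputable def extCoord (q : ℕ) (t : Fin q → ℝ) (m : ℤ) : ℝ :=
  if m < 0 then 0 else if h : m.toNat < q then t ⟨m.toNat, h⟩ else 1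

/-- The `i`-th face inclusion `d_i : Δ^q → Δ^{q+1}` in ordered coordinates (inserting `0`,
duplicating a coordinate, or appending `1`). -/
noncomputable def simplexFace (q : ℕ) (i : Fin (q + 2)) (t : Fin q → ℝ) :
    Fin (q + 1) → ℝ :=
  fun j => if ((j : ℕ) : ℤ) < ((i : ℕ) : ℤ) then extCoord q t ((j : ℕ) : ℤ)
    else extCoord q t (((j : ℕ) : ℤ) - 1)

/-!
On `s ≥ 0` the coordinate `u(x, s)` equals `∑ᵢ μᵢ(x) · clamp(N s - i)`, with `clamp` the
projection of `ℝ` onto `[0, 1]`: the `i`-th summand rises linearly from `0` to `μᵢ(x)` while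
`N s` runs through `[i, i + 1]`. In this form `u` is visibly continuous and monotone in `s`,
and lies between `u(x, 0) = 0` and `∑ᵢ μᵢ(x) = 1`. The faces only insert `0`, `1` or repeated
coordinates, and `u(x, ·)` fixes `0` and `1`, so `H₁` commutes with them.
-/

open Finset

section Clamp

variable (a : ℕ → ℝ) {y : ℝ}

theorem sum_range_mul_projIcc_sub (hy : 0 ≤ y) {n : ℕ} (hn : ⌊y⌋₊ < n) :
    ∑ i ∈ range n, a i * Set.projIcc (0 : ℝ) 1 zero_le_one (y - i) =
      ∑ i ∈ range ⌊y⌋₊, a i + a ⌊y⌋₊ * (y - ⌊y⌋₊) := by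
  set m := ⌊y⌋₊
  have hmy : (m : ℝ) ≤ y := Nat.floor_le hy
  have hym : y < m + 1 := Nat.lt_floor_add_one y
  have below : ∀ i ∈ range m, a i * Set.projIcc (0 : ℝ) 1 zero_le_one (y - i) = a i := by
    intro i hi
    have : (i : ℝ) + 1 ≤ m := by exact_mod_cast mem_range.1 hi
    rw [Set.projIcc_of_right_le _ (by linarith), mul_one]
  have above : ∀ i ∈ Ico (m + 1) n, a i * Set.projIcc (0 : ℝ) 1 zero_le_one (y - i) = 0 := by
    intro i hi
    have : (m : ℝ) + 1 ≤ i := by exact_mod_cast (mem_Ico.1 hi).1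
    rw [Set.projIcc_of_le_left _ (by linarith), mul_zero]
  rw [← sum_range_add_sum_Ico _ hn, sum_eq_zero above, add_zero, sum_range_succ,
    sum_congr rfl below, Set.projIcc_of_mem _ ⟨by linarith, by linarith⟩]

theorem sum_range_mul_projIcc_sub_of_support {N : ℕ} (ha : ∀ i, N ≤ i → a i = 0)
    (hy : 0 ≤ y) :
    ∑ i ∈ range N, a i * Set.projIcc (0 : ℝ) 1 zero_le_one (y - i) =
      ∑ i ∈ range ⌊y⌋₊, a i + a ⌊y⌋₊ * (y - ⌊y⌋₊) := by
  obtain ⟨n, hNn, hyn⟩ : ∃ n, N ≤ n ∧ ⌊y⌋₊ < n := ⟨N + ⌊y⌋₊ + 1, by omega, by omega⟩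
  rw [← sum_range_mul_projIcc_sub a hy hyn]
  refine sum_subset (range_subset_range.2 hNn) fun i _ hiN => ?_
  rw [ha i (by simpa using hiN), zero_mul]

end Clamp

section Fragmentation

variable {M : Type} [TopologicalSpace M] {N : ℕ} (μ : Fin N → C(M, ℝ))

theorem muExt_nonneg (hpos : ∀ i x, 0 ≤ μ i x) (m : ℕ) (x : M) : 0 ≤ muExt μ m x := by
  unfold muExt
  split
  · exact hpos _ x
  · exact le_rfl

theorem muExt_of_le {m : ℕ} (hm : N ≤ m) (x : M) : muExt μ m x = 0 :=
  dif_neg hm.not_gt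

theorem continuous_muExt (m : ℕ) : Continuous (muExt μ m) := by
  unfold muExt
  split
  · exact (μ _).continuous
  · exact continuous_const

theorem nuSum_self (hsum : ∀ x : M, ∑ i, μ i x = 1) (x : M) : nuSum μ N x = 1 := by
  rw [nuSum, ← Fin.sum_univ_eq_sum_range, ← hsum x]
  exact sum_congr rfl fun i _ => dif_pos i.isLt

theorem fragCoord_eq_sum (x : M) {s : ℝ} (hs : 0 ≤ s) :
    fragCoord μ x s =
      ∑ i ∈ range N, muExt μ i x * Set.projIcc (0 : ℝ) 1 zero_le_one (N * s - i) :=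
  (sum_range_mul_projIcc_sub_of_support _ (fun _ hi => muExt_of_le μ hi x)
    (by positivity)).symm

theorem fragCoord_zero (x : M) : fragCoord μ x 0 = 0 := by
  simp [fragCoord, nuSum]

theorem fragCoord_one (hsum : ∀ x : M, ∑ i, μ i x = 1) (x : M) : fragCoord μ x 1 = 1 := by
  rw [fragCoord, mul_one, Nat.floor_natCast, nuSum_self μ hsum, muExt_of_le μ le_rfl,
    zero_mul, add_zero]

theorem monotoneOn_fragCoord (hpos : ∀ i x, 0 ≤ μ i x) (x : M) :
    MonotoneOn (fragCoord μ x) (Set.Ici 0) := by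
  intro a ha b hb hab
  rw [fragCoord_eq_sum μ x ha, fragCoord_eq_sum μ x hb]
  gcongr with i
  · exact muExt_nonneg μ hpos i x
  · exact Set.monotone_projIcc _ (by gcongr)

theorem fragCoord_mem_Icc (hpos : ∀ i x, 0 ≤ μ i x) (hsum : ∀ x : M, ∑ i, μ i x = 1)
    (x : M) {s : ℝ} (hs : 0 ≤ s) : fragCoord μ x s ∈ Set.Icc 0 1 := by
  rw [fragCoord_eq_sum μ x hs]
  constructor
  · exact sum_nonneg fun i _ => mul_nonneg (muExt_nonneg μ hpos i x) (Set.projIcc _ _ _ _).2.1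
  · calc _ ≤ ∑ i ∈ range N, muExt μ i x :=
          sum_le_sum fun i _ => mul_le_of_le_one_right (muExt_nonneg μ hpos i x)
            (Set.projIcc _ _ _ _).2.2
      _ = 1 := nuSum_self μ hsum x

theorem continuousOn_fragCoord :
    ContinuousOn (fun p : M × ℝ => fragCoord μ p.1 p.2) (Set.univ ×ˢ Set.Ici 0) := by
  refine ContinuousOn.congr (f := fun p : M × ℝ => ∑ i ∈ range N,
      muExt μ i p.1 * Set.projIcc (0 : ℝ) 1 zero_le_one (N * p.2 - i)) ?_
    fun p hp => fragCoord_eq_sum μ p.1 hp.2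
  refine Continuous.continuousOn (continuous_finsetSum _ fun i _ => ?_)
  exact ((continuous_muExt μ i).comp continuous_fst).mul
    (continuous_subtype_val.comp (continuous_projIcc.comp (by fun_prop)))

theorem continuousOn_fragMap (q : ℕ) :
    ContinuousOn (fragMap μ q) (Set.univ ×ˢ {t | ∀ i, 0 ≤ t i}) := by
  unfold fragMap
  refine continuousOn_fst.prodMk (continuousOn_pi.2 fun i => ?_)
  exact (continuousOn_fragCoord μ).comp (f := fun p : M × (Fin q → ℝ) => (p.1, p.2 i))
    (by fun_prop) fun p hp => ⟨trivial, hp.2 i⟩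

theorem fragCoord_extCoord (hsum : ∀ x : M, ∑ i, μ i x = 1) (x : M) (q : ℕ)
    (t : Fin q → ℝ) (m : ℤ) :
    fragCoord μ x (extCoord q t m) = extCoord q (fun j => fragCoord μ x (t j)) m := by
  unfold extCoord
  split_ifs
  · exact fragCoord_zero μ x
  · rfl
  · exact fragCoord_one μ hsum x

end Fragmentation

/-- Given a partition of unity `μ_1, …, μ_N` on `M`, the fragmentation map
`H₁(x,t) = (x, u(x,t))` with `u_i(x,t) = ν_{⌊Nt_i⌋}(x) + μ_{⌊Nt_i⌋+1}(x)(Nt_i − ⌊Nt_i⌋)` is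
well defined (maps the simplex to itself), continuous, and commutes with all face
inclusions `d_i : Δ^q → Δ^{q+1}`. -/
theorem fragMap_wellDefined_continuous_commutes_faces {M : Type} [TopologicalSpace M]
    (N : ℕ) (μ : Fin N → C(M, ℝ)) (hpos : ∀ i x, 0 ≤ μ i x)
    (hsum : ∀ x : M, ∑ i, μ i x = 1) (q : ℕ) :
    (∀ (x : M), ∀ t ∈ orderedSimplex q,
        (fun i => fragCoord μ x (t i)) ∈ orderedSimplex q) ∧
    ContinuousOn (fragMap μ q) (Set.univ ×ˢ orderedSimplex q) ∧
    (∀ (i : Fin (q + 2)) (x : M), ∀ t ∈ orderedSimplex q,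
        (fun j => fragCoord μ x (simplexFace q i t j)) =
          simplexFace q i fun j' => fragCoord μ x (t j')) := by
  refine ⟨fun x t ⟨hmono, hbd⟩ => ⟨?_, fun i => fragCoord_mem_Icc μ hpos hsum x (hbd i).1⟩,
    ?_, fun i x t _ => ?_⟩
  · exact fun i j hij => monotoneOn_fragCoord μ hpos x (hbd i).1 (hbd j).1 (hmono hij)
  · exact (continuousOn_fragMap μ q).mono
      (Set.prod_mono le_rfl fun t ht i => (ht.2 i).1)
  · funext j
    unfold simplexFace
    split_ifs <;> exact fragCoord_extCoord μ hsum x q t _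
end
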